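/- arXiv:1001.0004 — 4 statements merged into one kernel-verified Lean document; each statement's English description precedes it below -/
import Mathlib

section
/- Let P be a d²×d² Hermitian complex matrix. If Tr(P) = Tr(P²) = Tr(P³) = Tr(P⁴) = d, then P is a projection (P² = P) of rank d. -/
open Matrix

set_option maxHeartbeats 1000000 in
theorem stmt0 (d : ℕ) (hd : 1 ≤ d) (P : Matrix (Fin (d^2)) (Fin (d^2)) ℂ)
    (hHerm : P.IsHermitian)
    (h1 : P.trace = (d : ℂ)) (h2 : (P ^ 2).trace = (d : ℂ))
    (h3 : (P ^ 3).trace = (d : ℂ)) (h4 : (P ^ 4).trace = (d : ℂ)) :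
    P ^ 2 = P ∧ P.rank = d := by
  classical
  set U : Matrix (Fin (d^2)) (Fin (d^2)) ℂ :=
    (Matrix.IsHermitian.eigenvectorUnitary hHerm : Matrix (Fin (d^2)) (Fin (d^2)) ℂ) with hU
  set lam := hHerm.eigenvalues with hlam
  have hUU : star U * U = 1 := Unitary.coe_star_mul_self _
  have hUU' : U * star U = 1 := Unitary.coe_mul_star_self _
  have hspec : P = U * diagonal (RCLike.ofReal ∘ lam) * star U := hHerm.spectral_theorem
  clear_value U lam
  have hpow : ∀ k : ℕ, P ^ k = U * (diagonal (RCLike.ofReal ∘ lam)) ^ k * star U := by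
    intro k
    induction k with
    | zero => simp [hUU']
    | succ k ih =>
      have key : star U * (U * (diagonal (RCLike.ofReal ∘ lam) * star U))
          = diagonal (RCLike.ofReal ∘ lam) * star U := by
        rw [← Matrix.mul_assoc, hUU, Matrix.one_mul]
      conv_lhs => rw [pow_succ, ih, hspec]
      simp only [pow_succ, Matrix.mul_assoc, key]
  have htr : ∀ k : ℕ, (P ^ k).trace = ∑ i, ((lam i : ℂ)) ^ k := by
    intro k
    rw [hpow k, Matrix.trace_mul_cycle, hUU, Matrix.one_mul, diagonal_pow, trace_diagonal]
    simp
  have hsum : ∀ k : ℕ, ((P ^ k).trace = (d : ℂ)) → ∑ i, (lam i) ^ k = (d : ℝ) := by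
    intro k hk
    have := (htr k).symm.trans hk
    have : ((∑ i, (lam i) ^ k : ℝ) : ℂ) = ((d : ℝ) : ℂ) := by
      push_cast
      simpa using this
    exact_mod_cast this
  have e1 : ∑ i, (lam i) ^ 1 = (d : ℝ) := hsum 1 (by simpa using h1)
  have e2 : ∑ i, (lam i) ^ 2 = (d : ℝ) := hsum 2 h2
  have e3 : ∑ i, (lam i) ^ 3 = (d : ℝ) := hsum 3 h3
  have e4 : ∑ i, (lam i) ^ 4 = (d : ℝ) := hsum 4 h4
  have hzero : ∑ i, (lam i * (lam i - 1)) ^ 2 = 0 := by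
    have : ∑ i, (lam i * (lam i - 1)) ^ 2
        = (∑ i, (lam i) ^ 4) - 2 * (∑ i, (lam i) ^ 3) + ∑ i, (lam i) ^ 2 := by
      rw [Finset.mul_sum, ← Finset.sum_sub_distrib, ← Finset.sum_add_distrib]
      apply Finset.sum_congr rfl
      intro i _
      ring
    rw [this, e2, e3, e4]; ring
  have hidem : ∀ i, lam i ^ 2 = lam i := by
    intro i
    have h := (Finset.sum_eq_zero_iff_of_nonneg (by intro i _; positivity)).mp hzero i
      (Finset.mem_univ i)
    have : lam i * (lam i - 1) = 0 := by
      exact pow_eq_zero_iff (by norm_num) |>.mp h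
    nlinarith [this]
  have hD2 : (diagonal (RCLike.ofReal ∘ lam) : Matrix (Fin (d^2)) (Fin (d^2)) ℂ) ^ 2
      = diagonal (RCLike.ofReal ∘ lam) := by
    have hf : (RCLike.ofReal ∘ lam : Fin (d^2) → ℂ) ^ 2 = RCLike.ofReal ∘ lam := by
      funext i
      show ((RCLike.ofReal (lam i) : ℂ)) ^ 2 = RCLike.ofReal (lam i)
      rw [← RCLike.ofReal_pow, hidem i]
    rw [diagonal_pow, hf]
  have hP2 : P ^ 2 = P := by
    rw [hpow 2, hD2, ← hspec]
  refine ⟨hP2, ?_⟩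
  -- rank
  have hrank := hHerm.rank_eq_card_non_zero_eigs
  rw [hrank]
  simp only [← hlam]
  have hcard : (Fintype.card {i // lam i ≠ 0} : ℝ) = (d : ℝ) := by
    rw [← e1]
    rw [Fintype.card_subtype, Finset.card_eq_sum_ones]
    push_cast
    rw [Finset.sum_filter]
    apply Finset.sum_congr rfl
    intro i _
    by_cases h : lam i = 0
    · simp [h]
    · have : lam i = 1 := by
        have := hidem i
        have h2 : lam i * (lam i - 1) = 0 := by nlinarith
        rcases mul_eq_zero.mp h2 with h' | h'
        · exact absurd h' h
        · linarith
      simp [h, this]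
  exact_mod_cast hcard
end

section
/- Let L be a Hermitian d×d complex matrix which is not a scalar multiple of the identity. Then the rank of the adjoint map ad_L : M ↦ LM − ML on d×d matrices is at least 2(d−1). -/
/-!
Diagonalize `L` unitarily as `U diag(μ) U*`. Conjugation by `U` is an algebra automorphism, so it
does not change the rank of `ad`. For `L = diag(μ)`, `ad_L` scales the matrix unit `E_ij` by
`μ_i - μ_j`, so its rank is at least the number of pairs `(i, j)` with `μ_i ≠ μ_j`; as `μ` is not
constant, there are at least `2(d - 1)` of them.
-/

open Matrix Finset

/-- If `a` of the `n` points share the value `f i`, the pairs straddling this class number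
`2a(n - a) ≥ 2(n - 1)`. -/
theorem Fintype.two_mul_card_sub_one_le_card_filter_ne {ι β : Type*} [Fintype ι] [DecidableEq β]
    (f : ι → β) {i j : ι} (hij : f i ≠ f j) :
    2 * (Fintype.card ι - 1) ≤ #{p : ι × ι | f p.1 ≠ f p.2} := by
  classical
  set A : Finset ι := {k | f k = f i}
  have hi : i ∈ A := by simp [A]
  have hj : j ∈ Aᶜ := by simpa [A] using hij.symm
  have hcross : A ×ˢ Aᶜ ∪ Aᶜ ×ˢ A ⊆ ({p : ι × ι | f p.1 ≠ f p.2} : Finset _) := by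
    intro p hp
    simp only [A, mem_union, mem_product, mem_compl, mem_filter, mem_univ, true_and] at hp ⊢
    rcases hp with ⟨h₁, h₂⟩ | ⟨h₁, h₂⟩
    · rwa [h₁, ne_comm]
    · rwa [h₂]
  have hdisj : Disjoint (A ×ˢ Aᶜ) (Aᶜ ×ˢ A) :=
    disjoint_product.mpr (Or.inl disjoint_compl_right)
  have hcard := card_le_card hcross
  rw [card_union_of_disjoint hdisj, card_product, card_product, mul_comm #Aᶜ] at hcard
  have ha := Finset.card_pos.mpr ⟨i, hi⟩
  have hb := Finset.card_pos.mpr ⟨j, hj⟩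
  have hab : #A + #Aᶜ ≤ #A * #Aᶜ + 1 := by nlinarith
  have hsum := card_compl_add_card A
  omega

theorem Matrix.diagonal_mul_single_sub_single_mul_diagonal {n R : Type*} [Fintype n]
    [DecidableEq n] [CommRing R] (μ : n → R) (i j : n) (c : R) :
    diagonal μ * single i j c - single i j c * diagonal μ = single i j ((μ i - μ j) * c) := by
  ext a b
  simp only [sub_apply, diagonal_mul, mul_diagonal, single_apply]
  split_ifs with h
  · obtain ⟨rfl, rfl⟩ := h
    ring
  · simp

theorem Matrix.card_filter_ne_le_finrank_range_diagonal {n K : Type*} [Fintype n]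
    [DecidableEq n] [Field K] [DecidableEq K] (μ : n → K) :
    #{p : n × n | μ p.1 ≠ μ p.2} ≤ Module.finrank K
      (LinearMap.range (LinearMap.mulLeft K (diagonal μ) - LinearMap.mulRight K (diagonal μ))) := by
  set S : Finset (n × n) := {p | μ p.1 ≠ μ p.2}
  have hbasis_mem : ∀ p ∈ S, stdBasis K n n p ∈ LinearMap.range
      (LinearMap.mulLeft K (diagonal μ) - LinearMap.mulRight K (diagonal μ)) := by
    rintro ⟨i, j⟩ hp
    have hne : μ i - μ j ≠ 0 := sub_ne_zero.mpr (mem_filter.mp hp).2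
    refine ⟨single i j (μ i - μ j)⁻¹, ?_⟩
    simp [diagonal_mul_single_sub_single_mul_diagonal, hne, stdBasis_eq_single]
  have hli : LinearIndependent K (fun p : S => stdBasis K n n p) :=
    (stdBasis K n n).linearIndependent.comp _ Subtype.val_injective
  simpa using (LinearIndependent.of_comp (LinearMap.range _).subtype
    (v := fun p : S => (⟨_, hbasis_mem p p.2⟩ : LinearMap.range _)) hli).fintype_card_le_finrank

theorem AlgEquiv.finrank_range_mulLeft_sub_mulRight {R A B : Type*} [CommRing R] [Ring A]
    [Ring B] [Algebra R A] [Algebra R B] (e : A ≃ₐ[R] B) (a : A) :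
    Module.finrank R (LinearMap.range (LinearMap.mulLeft R (e a) - LinearMap.mulRight R (e a))) =
      Module.finrank R (LinearMap.range (LinearMap.mulLeft R a - LinearMap.mulRight R a)) := by
  have hconj : LinearMap.mulLeft R (e a) - LinearMap.mulRight R (e a) =
      e.toLinearMap ∘ₗ (LinearMap.mulLeft R a - LinearMap.mulRight R a) ∘ₗ
        e.symm.toLinearMap := by
    ext x
    simp
  rw [hconj, LinearMap.range_comp,
    LinearMap.range_comp_of_range_eq_top _ (LinearEquiv.range e.symm.toLinearEquiv)]
  exact e.toLinearEquiv.finrank_map_eq _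

theorem Matrix.exists_ne_of_forall_diagonal_ne_smul_one {n R : Type*} [Fintype n]
    [DecidableEq n] [Semiring R] {μ : n → R} (h : ∀ c : R, diagonal μ ≠ c • (1 : Matrix n n R)) :
    ∃ i j, μ i ≠ μ j := by
  by_contra! hμ
  cases isEmpty_or_nonempty n with
  | inl _ => exact h 0 (Subsingleton.elim _ _)
  | inr hn =>
    obtain ⟨i⟩ := hn
    exact h (μ i) (by rw [smul_one_eq_diagonal]; exact congrArg diagonal (funext (hμ · i)))

theorem stmt9 (d : ℕ) (L : Matrix (Fin d) (Fin d) ℂ) (hherm : L.IsHermitian)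
    (hns : ∀ c : ℂ, L ≠ c • (1 : Matrix (Fin d) (Fin d) ℂ)) :
    2 * (d - 1) ≤ Module.finrank ℂ
      (LinearMap.range (LinearMap.mulLeft ℂ L - LinearMap.mulRight ℂ L)) := by
  set μ : Fin d → ℂ := RCLike.ofReal ∘ hherm.eigenvalues
  set e := (Unitary.conjStarAlgAut ℂ _ hherm.eigenvectorUnitary).toAlgEquiv
  have hL : L = e (diagonal μ) := hherm.spectral_theorem
  obtain ⟨i, j, hij⟩ : ∃ i j, μ i ≠ μ j :=
    exists_ne_of_forall_diagonal_ne_smul_one fun c hc => hns c (by rw [hL, hc, map_smul, map_one])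
  calc 2 * (d - 1) = 2 * (Fintype.card (Fin d) - 1) := by rw [Fintype.card_fin]
    _ ≤ #{p : Fin d × Fin d | μ p.1 ≠ μ p.2} := Fintype.two_mul_card_sub_one_le_card_filter_ne μ hij
    _ ≤ _ := card_filter_ne_le_finrank_range_diagonal μ
    _ = _ := by rw [hL, e.finrank_range_mulLeft_sub_mulRight]
end

section
/- Let L₁,…,L_{d²} be Hermitian d×d matrices forming a basis of the d×d complex matrices, with [L_r, L_s] = ∑_t C_{rst} L_t, and suppose the structure constants C_{rst} are completely antisymmetric in all three indices. Then ∑_r Tr(L_r)·L_r = κ·I where κ = (1/d)·∑_r (Tr L_r)² > 0. -/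
/-!
Put `A = ∑ r, tr (L r) • L r`. Taking traces in `[L r, L s] = ∑ t, C r s t • L t` gives
`∑ t, C r s t * tr (L t) = 0`; complete antisymmetry makes `C` cyclic, so the coefficients
`∑ r, tr (L r) * C r s u` of `[A, L s]` vanish. Hence `A` commutes with a spanning family, is
central, and so is a scalar `c • 1`; comparing traces gives `d * c = ∑ r, tr (L r) ^ 2`. The traces
of Hermitian matrices are real, and they cannot all vanish since `tr 1 = d ≠ 0`, so `c > 0`.
-/

open Matrix Finset Submodule

section StructureConstants

variable {ι R A : Type*} [Fintype ι] [CommRing R] [Ring A] [Algebra R A]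

theorem sum_mul_structConst_eq_zero {C : ι → ι → ι → R}
    (hanti₁ : ∀ r s t, C r s t = -C s r t) (hanti₂ : ∀ r s t, C r s t = -C r t s)
    {v : ι → R} (hv : ∀ r s, ∑ t, C r s t * v t = 0) (s u : ι) :
    ∑ r, v r * C r s u = 0 := by
  have hcycle : ∀ r, C r s u = -C u s r := fun r => by
    rw [hanti₂ r s u, hanti₁ r u s, hanti₂ u r s, neg_neg]
  calc ∑ r, v r * C r s u = -∑ r, C u s r * v r := by
        simp only [hcycle, ← sum_neg_distrib, mul_neg, mul_comm]
    _ = 0 := by rw [hv, neg_zero]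

theorem sum_smul_mul_sub_mul_sum_smul {L : ι → A} {C : ι → ι → ι → R}
    (hC : ∀ r s, L r * L s - L s * L r = ∑ t, C r s t • L t) (v : ι → R) (s : ι) :
    (∑ r, v r • L r) * L s - L s * ∑ r, v r • L r = ∑ u, (∑ r, v r * C r s u) • L u := by
  simp only [sum_mul, mul_sum, ← sum_sub_distrib, smul_mul_assoc, mul_smul_comm, ← smul_sub, hC,
    smul_sum, smul_smul, sum_smul]
  exact sum_comm

omit [Fintype ι] in
theorem mem_center_of_commute_of_span_eq_top {L : ι → A} (hspan : ⊤ ≤ span R (Set.range L))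
    {a : A} (ha : ∀ s, Commute a (L s)) : a ∈ Set.center A := by
  have hcent : span R (Set.range L) ≤ Subalgebra.toSubmodule (Subalgebra.centralizer R {a}) :=
    span_le.mpr <| Set.range_subset_iff.mpr fun s =>
      (Subalgebra.mem_centralizer_iff R).mpr fun _ hb => hb ▸ (ha s).eq
  exact Semigroup.mem_center_iff.mpr fun b =>
    ((Subalgebra.mem_centralizer_iff R).mp (hcent (hspan mem_top)) a rfl).symm

end StructureConstants

section Trace

variable {ι n R : Type*} [Fintype n] [CommRing R]

theorem sum_structConst_mul_trace_eq_zero [Fintype ι] {L : ι → Matrix n n R} {C : ι → ι → ι → R}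
    (hC : ∀ r s, L r * L s - L s * L r = ∑ t, C r s t • L t) (r s : ι) :
    ∑ t, C r s t * (L t).trace = 0 := by
  simpa [trace_sub, trace_sum, trace_smul, trace_mul_comm (L r)] using (congrArg trace (hC r s)).symm

theorem exists_trace_ne_zero_of_span_eq_top [DecidableEq n] {L : ι → Matrix n n R}
    (hspan : ⊤ ≤ span R (Set.range L)) (hn : (Fintype.card n : R) ≠ 0) :
    ∃ r, (L r).trace ≠ 0 := by
  by_contra! h
  have hker : span R (Set.range L) ≤ LinearMap.ker (traceLinearMap n R R) :=
    span_le.mpr <| Set.range_subset_iff.mpr h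
  exact hn (by simpa using hker (hspan (mem_top (x := 1))))

theorem Matrix.IsHermitian.ofReal_re_trace {𝕜 : Type*} [RCLike 𝕜] {M : Matrix n n 𝕜}
    (hM : M.IsHermitian) : (RCLike.re M.trace : 𝕜) = M.trace := by
  rw [← RCLike.conj_eq_iff_re, starRingEnd_apply, ← trace_conjTranspose, hM.eq]

end Trace

theorem stmt13_general (d : ℕ) (hd : 0 < d) (L : Fin (d^2) → Matrix (Fin d) (Fin d) ℂ)
    (hherm : ∀ r, (L r).IsHermitian)
    (hspan : ⊤ ≤ Submodule.span ℂ (Set.range L))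
    (C : Fin (d^2) → Fin (d^2) → Fin (d^2) → ℂ)
    (hC : ∀ r s, L r * L s - L s * L r = ∑ t, C r s t • L t)
    (hanti1 : ∀ r s t, C r s t = -C s r t)
    (hanti2 : ∀ r s t, C r s t = -C r t s) :
    ∃ κ : ℝ, 0 < κ ∧ (κ : ℂ) = (1 / (d : ℂ)) * ∑ r, ((L r).trace) ^ 2 ∧
      ∑ r, (L r).trace • L r = (κ : ℂ) • (1 : Matrix (Fin d) (Fin d) ℂ) := by
  have hcomm : ∀ s, Commute (∑ r, (L r).trace • L r) (L s) := fun s => by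
    refine sub_eq_zero.mp ?_
    rw [sum_smul_mul_sub_mul_sum_smul hC]
    simp [sum_mul_structConst_eq_zero hanti1 hanti2 (sum_structConst_mul_trace_eq_zero hC)]
  obtain ⟨c, hc⟩ : ∑ r, (L r).trace • L r ∈ Set.range (scalar (Fin d)) := by
    rw [← center_eq_range]
    exact mem_center_of_commute_of_span_eq_top hspan hcomm
  have hdC : (d : ℂ) ≠ 0 := by exact_mod_cast hd.ne'
  have htrace : (d : ℂ) * c = ∑ r, (L r).trace ^ 2 := by
    simpa [trace_sum, trace_smul, sq] using congrArg trace hc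
  have hre : ∀ r, ((L r).trace.re : ℂ) = (L r).trace := fun r => (hherm r).ofReal_re_trace
  have hsum : ((∑ r, (L r).trace.re ^ 2 : ℝ) : ℂ) = ∑ r, (L r).trace ^ 2 := by
    simp only [Complex.ofReal_sum, Complex.ofReal_pow, hre]
  obtain ⟨r₀, hr₀⟩ := exists_trace_ne_zero_of_span_eq_top hspan (by simpa using hdC)
  have hpos : 0 < ∑ r, (L r).trace.re ^ 2 := by
    refine sum_pos' (fun r _ => sq_nonneg _) ⟨r₀, mem_univ _, sq_pos_of_ne_zero fun h => hr₀ ?_⟩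
    rw [← hre, h, Complex.ofReal_zero]
  have hκ : ((1 / d * ∑ r, (L r).trace.re ^ 2 : ℝ) : ℂ) = 1 / d * ∑ r, (L r).trace ^ 2 := by
    rw [Complex.ofReal_mul, hsum, one_div, Complex.ofReal_inv, Complex.ofReal_natCast, one_div]
  refine ⟨1 / d * ∑ r, (L r).trace.re ^ 2, mul_pos (by positivity) hpos, hκ, ?_⟩
  rw [hκ, ← hc, scalar_apply, ← smul_one_eq_diagonal, ← htrace]
  field_simp

theorem stmt13 (d : ℕ) (hd : 0 < d) (L : Fin (d^2) → Matrix (Fin d) (Fin d) ℂ)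
    (hherm : ∀ r, (L r).IsHermitian) (hindep : LinearIndependent ℂ L)
    (hspan : ⊤ ≤ Submodule.span ℂ (Set.range L))
    (C : Fin (d^2) → Fin (d^2) → Fin (d^2) → ℂ)
    (hC : ∀ r s, L r * L s - L s * L r = ∑ t, C r s t • L t)
    (hanti1 : ∀ r s t, C r s t = -C s r t)
    (hanti2 : ∀ r s t, C r s t = -C r t s) :
    ∃ κ : ℝ, 0 < κ ∧ (κ : ℂ) = (1 / (d : ℂ)) * ∑ r, ((L r).trace) ^ 2 ∧
      ∑ r, (L r).trace • L r = (κ : ℂ) • (1 : Matrix (Fin d) (Fin d) ℂ) :=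
  stmt13_general d hd L hherm hspan C hC hanti1 hanti2
end

section
/- Let Π₁,…,Π_{d²} be a SIC set on ℂ^d, and define T_{rst} = Tr(Π_r Π_s Π_t). Then for all r,s: Π_r Π_s = ((d+1)/d)·∑_t T_{rst} Π_t − ((d·δ_{rs}+1)/(d+1))·I. -/
open Matrix Finset

lemma trace_mul_conjTranspose_self_eq_zero' {n : ℕ} (X : Matrix (Fin n) (Fin n) ℂ)
    (h : (X * Xᴴ).trace = 0) : X = 0 := by
  have h1 : (X * Xᴴ).trace = ∑ i, ∑ j, (Complex.normSq (X i j) : ℂ) := by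
    simp only [Matrix.trace, Matrix.diag, Matrix.mul_apply, Matrix.conjTranspose_apply]
    congr 1; ext i; congr 1; ext j
    rw [Complex.star_def, Complex.mul_conj]
  rw [h1] at h
  have h2 : ∑ i, ∑ j, Complex.normSq (X i j) = 0 := by
    have := congrArg Complex.re h
    simpa using this
  ext i j
  have h3 : ∀ i ∈ Finset.univ, (0:ℝ) ≤ ∑ j, Complex.normSq (X i j) :=
    fun i _ => Finset.sum_nonneg fun j _ => Complex.normSq_nonneg _
  have h4 := (Finset.sum_eq_zero_iff_of_nonneg h3).mp h2 i (Finset.mem_univ i)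
  have h5 := (Finset.sum_eq_zero_iff_of_nonneg
    (fun j _ => Complex.normSq_nonneg (X i j))).mp h4 j (Finset.mem_univ j)
  simpa using Complex.normSq_eq_zero.mp h5

lemma sic_inj (d : ℕ) (hd : 0 < d) (Pr : Fin (d^2) → Matrix (Fin d) (Fin d) ℂ)
    (hSIC : ∀ r s, (Pr r * Pr s).trace =
      ((d : ℂ) * (if r = s then 1 else 0) + 1) / ((d : ℂ) + 1))
    (X : Matrix (Fin d) (Fin d) ℂ) (hX : ∀ t, (X * Pr t).trace = 0) : X = 0 := by
  have hd1 : ((d:ℂ) + 1) ≠ 0 := Nat.cast_add_one_ne_zero d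
  have hdc : (d:ℂ) ≠ 0 := Nat.cast_ne_zero.mpr hd.ne'
  have hli : LinearIndependent ℂ Pr := by
    rw [Fintype.linearIndependent_iff]
    intro c hc s
    have key : ∀ u, (d:ℂ) * c u + ∑ t, c t = 0 := by
      intro u
      have h1 : ((∑ t, c t • Pr t) * Pr u).trace = 0 := by rw [hc]; simp
      rw [Finset.sum_mul, Matrix.trace_sum] at h1
      simp only [Matrix.smul_mul, Matrix.trace_smul, hSIC, smul_eq_mul] at h1
      have h2 : ∑ t, c t * (((d : ℂ) * (if t = u then 1 else 0) + 1) / ((d : ℂ) + 1))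
          = ((d:ℂ) * c u + ∑ t, c t) / ((d:ℂ)+1) := by
        simp only [← mul_div_assoc]
        rw [← Finset.sum_div]
        congr 1
        simp only [mul_add, mul_one, mul_ite, mul_zero, Finset.sum_add_distrib,
          Finset.sum_ite_eq', Finset.mem_univ, if_true]
        ring
      rw [h2] at h1
      exact (div_eq_zero_iff.mp h1).resolve_right hd1
    have hsum : ∑ t, c t = 0 := by
      have h4 : ∑ u, ((d:ℂ) * c u + ∑ t, c t) = 0 := Finset.sum_eq_zero fun u _ => key u
      rw [Finset.sum_add_distrib, ← Finset.mul_sum, Finset.sum_const, Finset.card_univ,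
        Fintype.card_fin, nsmul_eq_mul] at h4
      have h5 : ((d:ℂ) + (d:ℂ)^2) * (∑ t, c t) = 0 := by push_cast at h4 ⊢; linear_combination h4
      have h6 : ((d:ℂ) + (d:ℂ)^2) ≠ 0 := by
        have : ((d + d^2 : ℕ) : ℂ) ≠ 0 := Nat.cast_ne_zero.mpr (by positivity)
        push_cast at this; exact this
      exact (mul_eq_zero.mp h5).resolve_left h6
    have := key s
    rw [hsum, add_zero] at this
    exact (mul_eq_zero.mp this).resolve_left hdc
  have : Nonempty (Fin (d^2)) := ⟨⟨0, by positivity⟩⟩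
  have hspan : Submodule.span ℂ (Set.range Pr) = ⊤ := by
    apply hli.span_eq_top_of_card_eq_finrank
    simp [Module.finrank_matrix, sq]
  have hY : ∀ Y : Matrix (Fin d) (Fin d) ℂ, (X * Y).trace = 0 := by
    intro Y
    have hYmem : Y ∈ Submodule.span ℂ (Set.range Pr) := hspan ▸ Submodule.mem_top
    induction hYmem using Submodule.span_induction with
    | mem y hy => obtain ⟨t, rfl⟩ := hy; exact hX t
    | zero => simp
    | add y z _ _ hy hz => rw [mul_add, Matrix.trace_add, hy, hz, add_zero]
    | smul a y _ hy => rw [Matrix.mul_smul, Matrix.trace_smul, hy, smul_zero]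
  exact trace_mul_conjTranspose_self_eq_zero' X (hY Xᴴ)

lemma sic_sum (d : ℕ) (hd : 0 < d) (Pr : Fin (d^2) → Matrix (Fin d) (Fin d) ℂ)
    (htr : ∀ r, (Pr r).trace = 1)
    (hSIC : ∀ r s, (Pr r * Pr s).trace =
      ((d : ℂ) * (if r = s then 1 else 0) + 1) / ((d : ℂ) + 1)) :
    ∑ t, Pr t = (d:ℂ) • (1 : Matrix (Fin d) (Fin d) ℂ) := by
  have hd1 : ((d:ℂ) + 1) ≠ 0 := Nat.cast_add_one_ne_zero d
  rw [← sub_eq_zero]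
  apply sic_inj d hd Pr hSIC
  intro t
  rw [Matrix.sub_mul, Matrix.trace_sub, Finset.sum_mul, Matrix.trace_sum,
    Matrix.smul_mul, Matrix.one_mul, Matrix.trace_smul]
  simp only [hSIC, htr, smul_eq_mul, mul_one]
  rw [← Finset.sum_div]
  have h1 : ∑ u : Fin (d^2), ((d : ℂ) * (if u = t then 1 else 0) + 1) = (d:ℂ) + (d:ℂ)^2 := by
    simp only [mul_ite, mul_one, mul_zero, Finset.sum_add_distrib,
      Finset.sum_ite_eq', Finset.mem_univ, if_true, Finset.sum_const,
      Finset.card_univ, Fintype.card_fin, nsmul_eq_mul]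
    push_cast; ring
  rw [h1]
  field_simp
  ring

theorem stmt16 (d : ℕ) (hd : 0 < d) (Pr : Fin (d^2) → Matrix (Fin d) (Fin d) ℂ)
    (hherm : ∀ r, (Pr r).IsHermitian) (hidem : ∀ r, (Pr r) ^ 2 = Pr r)
    (htr : ∀ r, (Pr r).trace = 1)
    (hSIC : ∀ r s, (Pr r * Pr s).trace =
      ((d : ℂ) * (if r = s then 1 else 0) + 1) / ((d : ℂ) + 1)) :
    ∀ r s, Pr r * Pr s =
      (((d : ℂ) + 1) / (d : ℂ)) • (∑ t, (Pr r * Pr s * Pr t).trace • Pr t)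
        - ((((d : ℂ) * (if r = s then 1 else 0) + 1) / ((d : ℂ) + 1)) •
            (1 : Matrix (Fin d) (Fin d) ℂ)) := by
  intro r s
  have hd1 : ((d:ℂ) + 1) ≠ 0 := Nat.cast_add_one_ne_zero d
  have hdc : (d:ℂ) ≠ 0 := Nat.cast_ne_zero.mpr hd.ne'
  set τ : ℂ := ((d : ℂ) * (if r = s then 1 else 0) + 1) / ((d : ℂ) + 1) with hτ
  rw [eq_comm, ← sub_eq_zero]
  apply sic_inj d hd Pr hSIC
  intro t
  set T : Fin (d^2) → ℂ := fun u => (Pr r * Pr s * Pr u).trace with hT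
  -- total sum of T
  have hSig : ∑ u, T u = (d:ℂ) * τ := by
    have : ∑ u, T u = ((Pr r * Pr s) * (∑ u, Pr u)).trace := by
      rw [Finset.mul_sum, Matrix.trace_sum]
    rw [this, sic_sum d hd Pr htr hSIC, Matrix.mul_smul, Matrix.mul_one,
      Matrix.trace_smul, smul_eq_mul, hSIC r s]
  rw [Matrix.sub_mul, Matrix.trace_sub, Matrix.sub_mul, Matrix.trace_sub]
  rw [Matrix.smul_mul, Matrix.trace_smul, Finset.sum_mul, Matrix.trace_sum]
  rw [Matrix.smul_mul, Matrix.one_mul, Matrix.trace_smul]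
  simp only [Matrix.smul_mul, Matrix.trace_smul, smul_eq_mul]
  have h2 : ∑ u, T u * (Pr u * Pr t).trace = ((d:ℂ) * T t + ∑ u, T u) / ((d:ℂ)+1) := by
    simp only [hSIC, ← mul_div_assoc]
    rw [← Finset.sum_div]
    congr 1
    simp only [mul_add, mul_one, mul_ite, mul_zero, Finset.sum_add_distrib,
      Finset.sum_ite_eq', Finset.mem_univ, if_true]
    ring
  rw [h2, hSig, htr t]
  have hTt : (Pr r * Pr s * Pr t).trace = T t := rfl
  rw [hTt]
  field_simp
  ring
end
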